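/- arXiv:2503.14658 — 2 statements merged into one kernel-verified Lean document; each statement's English description precedes it below -/
import Mathlib

section
/- Let (z_t)_t be a strong Feller Markov process on a Polish space Z and let ν be an invariant measure for (z_t)_t whose support is connected. Then ν is ergodic. -/
open MeasureTheory ProbabilityTheory
open scoped ENNReal

/-- The Markov semigroup `P` (indexed by `t > 0`) is strong Feller: for every bounded
measurable observable `φ` the map `z ↦ ∫ φ d(P t z)` is continuous. -/
def IsStrongFeller5 {Z : Type*} [MeasurableSpace Z] [TopologicalSpace Z]
    (P : ℝ → Kernel Z Z) : Prop :=
  ∀ t : ℝ, 0 < t → ∀ φ : Z → ℝ, Measurable φ → (∃ C, ∀ z, |φ z| ≤ C) →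
    Continuous fun z => ∫ y, φ y ∂(P t z)

/-- `m` is invariant for the Markov semigroup `P`. -/
def IsInvariant5 {Z : Type*} [MeasurableSpace Z] (P : ℝ → Kernel Z Z)
    (m : Measure Z) : Prop :=
  ∀ t : ℝ, 0 < t → m.bind (P t) = m

/-- `m` is ergodic for `P`: every set `E` with `P_t 1_E = 1_E` `m`-a.e. for all `t > 0`
has measure `0` or `1`. -/
def IsErgodic5 {Z : Type*} [MeasurableSpace Z] (P : ℝ → Kernel Z Z)
    (m : Measure Z) : Prop :=
  IsInvariant5 P m ∧
    ∀ E : Set Z, MeasurableSet E →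
      (∀ t : ℝ, 0 < t → ∀ᵐ z ∂m, P t z E = E.indicator (fun _ => (1 : ℝ≥0∞)) z) →
      m E = 0 ∨ m E = 1

/-- The topological support of a measure: points all of whose neighbourhoods have
positive measure. -/
def measSupp5 {Z : Type*} [MeasurableSpace Z] [TopologicalSpace Z] (m : Measure Z) :
    Set Z :=
  {z | ∀ U : Set Z, IsOpen U → z ∈ U → 0 < m U}

/-!
The strong Feller property makes `g := P₁ 1_E` continuous, and invariance of `E` says that
`g = 1_E` `ν`-a.e. A continuous function that lies a.e. in the closed set `{0, 1}` lies in it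
on the whole support, so the connected support is covered by the disjoint open sets
`{g < 1/2}` and `{g > 1/2}` and must sit inside one of them. Since the support is conull,
`1_E` is then a.e. `0` or a.e. `1`.
-/

open Set

lemma measSupp5_eq_support {Z : Type*} [MeasurableSpace Z] [TopologicalSpace Z]
    (m : Measure Z) : measSupp5 m = m.support := by
  simp only [measSupp5, Measure.support_eq_forall_isOpen]
  grind

lemma IsStrongFeller5.continuous_measureReal {Z : Type*} [MeasurableSpace Z]
    [TopologicalSpace Z] {P : ℝ → Kernel Z Z} (hP : IsStrongFeller5 P) {t : ℝ} (ht : 0 < t)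
    {E : Set Z} (hE : MeasurableSet E) : Continuous fun z => (P t z).real E := by
  have hbdd : ∃ C, ∀ z, |E.indicator (1 : Z → ℝ) z| ≤ C :=
    ⟨1, fun z => by by_cases hz : z ∈ E <;> simp [hz]⟩
  convert hP t ht _ (measurable_const.indicator hE) hbdd using 2 with z
  exact (integral_indicator_one hE).symm

lemma measure_eq_zero_or_measure_compl_eq_zero_of_indicator_ae_eq_continuous
    {X : Type*} [TopologicalSpace X] [MeasurableSpace X] [HereditarilyLindelofSpace X]
    {μ : Measure X} (hconn : IsPreconnected μ.support) {E : Set X} {g : X → ℝ}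
    (hg : Continuous g) (hgE : g =ᵐ[μ] E.indicator 1) : μ E = 0 ∨ μ Eᶜ = 0 := by
  have h01 : μ.support ⊆ g ⁻¹' {0, 1} := by
    refine Measure.support_subset_of_isClosed ((Set.toFinite _).isClosed.preimage hg) ?_
    filter_upwards [hgE] with z hz
    by_cases hzE : z ∈ E <;> simp [hz, hzE]
  have hcover : μ.support ⊆ g ⁻¹' Ioi (1 / 2) ∪ g ⁻¹' Iio (1 / 2) := by
    intro z hz
    obtain h | h : g z = 0 ∨ g z = 1 := h01 hz
    · exact Or.inr (by norm_num [h])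
    · exact Or.inl (by norm_num [h])
  rcases hconn.subset_or_subset (isOpen_Ioi.preimage hg) (isOpen_Iio.preimage hg)
    (Ioi_disjoint_Iio_same.preimage g) hcover with hhigh | hlow
  · right
    rw [measure_eq_zero_iff_ae_notMem]
    filter_upwards [hgE, Measure.support_mem_ae] with z hz hzS hzE
    have := hhigh hzS
    norm_num [hz, indicator_of_notMem hzE] at this
  · left
    rw [measure_eq_zero_iff_ae_notMem]
    filter_upwards [hgE, Measure.support_mem_ae] with z hz hzS hzE
    have := hlow hzS
    norm_num [hz, indicator_of_mem hzE] at this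

theorem stmt5_general {Z : Type*} [MeasurableSpace Z] [TopologicalSpace Z] [PolishSpace Z]
    (P : ℝ → Kernel Z Z)
    (hFeller : IsStrongFeller5 P)
    (ν : Measure Z) [IsProbabilityMeasure ν]
    (hinv : IsInvariant5 P ν) (hconn : IsConnected (measSupp5 ν)) :
    IsErgodic5 P ν := by
  refine ⟨hinv, fun E hE hEinv => ?_⟩
  have hgE : (fun z => (P 1 z).real E) =ᵐ[ν] E.indicator 1 := by
    filter_upwards [hEinv 1 one_pos] with z hz
    by_cases hzE : z ∈ E <;> simp [measureReal_def, hz, hzE]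
  rw [← prob_compl_eq_zero_iff hE]
  exact measure_eq_zero_or_measure_compl_eq_zero_of_indicator_ae_eq_continuous
    (measSupp5_eq_support ν ▸ hconn.isPreconnected)
    (hFeller.continuous_measureReal one_pos hE) hgE

/-- A strong Feller Markov process on a Polish space with an invariant
measure whose support is connected has that invariant measure ergodic. -/
theorem stmt5 {Z : Type*} [MeasurableSpace Z] [TopologicalSpace Z] [PolishSpace Z]
    [BorelSpace Z] (P : ℝ → Kernel Z Z) (hP : ∀ t, IsMarkovKernel (P t))
    (hFeller : IsStrongFeller5 P)
    (ν : Measure Z) [IsProbabilityMeasure ν]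
    (hinv : IsInvariant5 P ν) (hconn : IsConnected (measSupp5 ν)) :
    IsErgodic5 P ν :=
  stmt5_general P hFeller ν hinv hconn
end

section
/- Let Z and W be Polish spaces, (z_t)_t a Markov process on Z and (z_t,w_t)_t a Markov process on Z×W. Let ν be an ergodic invariant measure for (z_t)_t, and let 𝒬 be the convex set of invariant measures μ for (z_t,w_t)_t whose marginal on Z equals ν. If μ is an extreme point of 𝒬, then μ is an ergodic measure for (z_t,w_t)_t. -/
/-!
Let `E` be an invariant set of `μ` with `0 < μ E < 1`. Then `μ` is the convex combination
`μ E • μ[|E] + μ Eᶜ • μ[|Eᶜ]` of its two normalised restrictions, which are again invariant.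
Their `Z`-marginals are invariant and absolutely continuous with respect to the ergodic measure
`ν`, hence equal to `ν`. Indeed, for an invariant `ρ ≪ ν` with density `h`, the flux of mass
out of `F = {h > 1}` equals the flux into it, both for `ν` and for `ρ = h • ν`. As `h > 1` on `F`
and `h ≤ 1` off `F`, this forces both fluxes to vanish, so `F` is invariant and by ergodicity
`h ≤ 1` or `h ≥ 1` almost everywhere, i.e. `ρ ≤ ν` or `ν ≤ ρ`. Thus both restrictions lie in
`𝒬`, and they differ, contradicting extremality.
-/

open MeasureTheory ProbabilityTheory
open scoped ENNReal

def IsInvariant6 {X : Type*} [MeasurableSpace X] (P : ℝ → Kernel X X)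
    (m : Measure X) : Prop :=
  ∀ t : ℝ, 0 < t → m.bind (P t) = m

def IsErgodic6 {X : Type*} [MeasurableSpace X] (P : ℝ → Kernel X X)
    (m : Measure X) : Prop :=
  IsInvariant6 P m ∧
    ∀ E : Set X, MeasurableSet E →
      (∀ t : ℝ, 0 < t → ∀ᵐ x ∂m, P t x E = E.indicator (fun _ => (1 : ℝ≥0∞)) x) →
      m E = 0 ∨ m E = 1

section

variable {X Y : Type*} [MeasurableSpace X] [MeasurableSpace Y]

def IsAEInvariantSet (κ : Kernel X X) (m : Measure X) (E : Set X) : Prop :=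
  ∀ᵐ x ∂m, κ x E = E.indicator (fun _ => 1) x

section MarkovKernel

variable {κ : Kernel X X} [IsMarkovKernel κ] {m : Measure X} {E : Set X}

lemma isAEInvariantSet_iff (hE : MeasurableSet E) :
    IsAEInvariantSet κ m E ↔
      (∀ᵐ x ∂m.restrict E, κ x Eᶜ = 0) ∧ ∀ᵐ x ∂m.restrict Eᶜ, κ x E = 0 := by
  have hin : ∀ᵐ x ∂m.restrict E, (κ x E = E.indicator (fun _ => 1) x ↔ κ x Eᶜ = 0) := by
    filter_upwards [ae_restrict_mem hE] with x hx
    rw [Set.indicator_of_mem hx, prob_compl_eq_zero_iff hE]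
  have hout : ∀ᵐ x ∂m.restrict Eᶜ, (κ x E = E.indicator (fun _ => 1) x ↔ κ x E = 0) := by
    filter_upwards [ae_restrict_mem hE.compl] with x hx
    rw [Set.indicator_of_notMem hx]
  constructor
  · intro h
    exact ⟨(ae_restrict_of_ae h).and hin |>.mono fun x hx => hx.2.1 hx.1,
      (ae_restrict_of_ae h).and hout |>.mono fun x hx => hx.2.1 hx.1⟩
  · rintro ⟨h₁, h₂⟩
    exact ae_of_ae_restrict_of_ae_restrict_compl E (h₁.and hin |>.mono fun x hx => hx.2.2 hx.1)
      (h₂.and hout |>.mono fun x hx => hx.2.2 hx.1)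

lemma IsAEInvariantSet.compl (hE : MeasurableSet E) (h : IsAEInvariantSet κ m E) :
    IsAEInvariantSet κ m Eᶜ := by
  rw [isAEInvariantSet_iff hE] at h
  rw [isAEInvariantSet_iff hE.compl, compl_compl]
  exact h.symm

lemma setLIntegral_kernel_compl_eq [IsFiniteMeasure m] (hm : m.bind κ = m)
    (hE : MeasurableSet E) : ∫⁻ x in E, κ x Eᶜ ∂m = ∫⁻ x in Eᶜ, κ x E ∂m := by
  have hstay : ∫⁻ x in E, κ x E ∂m + ∫⁻ x in E, κ x Eᶜ ∂m = m E := by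
    rw [← lintegral_add_left (κ.measurable_coe hE)]
    simp [measure_add_measure_compl hE]
  have hall : ∫⁻ x in E, κ x E ∂m + ∫⁻ x in Eᶜ, κ x E ∂m = m E := by
    rw [lintegral_add_compl _ hE, ← Measure.bind_apply hE κ.aemeasurable, hm]
  have hfin : ∫⁻ x in E, κ x E ∂m ≠ ∞ :=
    ne_top_of_le_ne_top (measure_ne_top m E) (hstay ▸ le_self_add)
  exact (ENNReal.add_right_inj hfin).mp (hstay.trans hall.symm)

lemma restrict_bind_eq_of_isAEInvariantSet (hm : m.bind κ = m) (hE : MeasurableSet E)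
    (hEinv : IsAEInvariantSet κ m E) : (m.restrict E).bind κ = m.restrict E := by
  obtain ⟨hstay, hnoentry⟩ := (isAEInvariantSet_iff hE).mp hEinv
  ext A hA
  have hleak : ∫⁻ x in Eᶜ, κ x (A ∩ E) ∂m = 0 := by
    rw [lintegral_eq_zero_iff (κ.measurable_coe (hA.inter hE))]
    exact hnoentry.mono fun x hx => measure_mono_null Set.inter_subset_right hx
  calc ((m.restrict E).bind κ) A = ∫⁻ x in E, κ x (A ∩ E) ∂m := by
        rw [Measure.bind_apply hA κ.aemeasurable]
        exact lintegral_congr_ae (hstay.mono fun x hx => (measure_inter_conull hx).symm)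
    _ = ∫⁻ x in E, κ x (A ∩ E) ∂m + ∫⁻ x in Eᶜ, κ x (A ∩ E) ∂m := by rw [hleak, add_zero]
    _ = ∫⁻ x, κ x (A ∩ E) ∂m := lintegral_add_compl _ hE
    _ = m.restrict E A := by
        rw [← Measure.bind_apply (hA.inter hE) κ.aemeasurable, hm, Measure.restrict_apply hA]

lemma isAEInvariantSet_one_lt_rnDeriv {ρ ν : Measure X} [IsFiniteMeasure ρ] [IsFiniteMeasure ν]
    (hν : ν.bind κ = ν) (hρ : ρ.bind κ = ρ) (hac : ρ ≪ ν) :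
    IsAEInvariantSet κ ν {x | 1 < ρ.rnDeriv ν x} := by
  set h := ρ.rnDeriv ν
  set F := {x | 1 < h x}
  have hh : Measurable h := Measure.measurable_rnDeriv ρ ν
  have hF : MeasurableSet F := measurableSet_lt measurable_const hh
  have hdens : ∀ {s : Set X}, MeasurableSet s → ∀ {A : Set X}, MeasurableSet A →
      ∫⁻ x in s, h x * κ x A ∂ν = ∫⁻ x in s, κ x A ∂ρ := fun hs _ hA =>
    setLIntegral_rnDeriv_mul hac (κ.measurable_coe hA).aemeasurable hs
  have hin_le : ∫⁻ x in Fᶜ, h x * κ x F ∂ν ≤ ∫⁻ x in Fᶜ, κ x F ∂ν :=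
    setLIntegral_mono' hF.compl fun x hx => mul_le_of_le_one_left' (not_lt.mp hx)
  have hweighted : ∫⁻ x in F, h x * κ x Fᶜ ∂ν ≤ ∫⁻ x in F, κ x Fᶜ ∂ν := by
    rw [hdens hF hF.compl, setLIntegral_kernel_compl_eq hρ hF, ← hdens hF.compl hF,
      setLIntegral_kernel_compl_eq hν hF]
    exact hin_le
  have hout_fin : ∫⁻ x in F, κ x Fᶜ ∂ν ≠ ∞ := by
    refine ne_top_of_le_ne_top (measure_ne_top ν F) ?_
    calc ∫⁻ x in F, κ x Fᶜ ∂ν ≤ ∫⁻ _ in F, 1 ∂ν := setLIntegral_mono' hF fun x _ => prob_le_one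
      _ = ν F := setLIntegral_one F
  have hexit : ∀ᵐ x ∂ν.restrict F, κ x Fᶜ = 0 := by
    have hle : ∀ᵐ x ∂ν.restrict F, κ x Fᶜ ≤ h x * κ x Fᶜ := by
      filter_upwards [ae_restrict_mem hF] with x hx using le_mul_of_one_le_left' hx.le
    filter_upwards [ae_eq_of_ae_le_of_lintegral_le hle hout_fin
      (hh.mul (κ.measurable_coe hF.compl)).aemeasurable hweighted, ae_restrict_mem hF]
      with x hx hxF
    by_contra hx0
    rw [eq_comm, mul_comm, ENNReal.mul_eq_left hx0 (measure_ne_top _ _)] at hx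
    exact hxF.ne' hx
  have hentry : ∀ᵐ x ∂ν.restrict Fᶜ, κ x F = 0 := by
    refine (lintegral_eq_zero_iff (κ.measurable_coe hF)).mp ?_
    rw [← setLIntegral_kernel_compl_eq hν hF]
    exact (lintegral_eq_zero_iff (κ.measurable_coe hF.compl)).mpr hexit
  exact (isAEInvariantSet_iff hF).mpr ⟨hexit, hentry⟩

end MarkovKernel

lemma IsErgodic6.eq_of_absolutelyContinuous {P : ℝ → Kernel X X}
    (hP : ∀ t, IsMarkovKernel (P t)) {ν ρ : Measure X} [IsProbabilityMeasure ν]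
    [IsProbabilityMeasure ρ] (hν : IsErgodic6 P ν) (hρ : IsInvariant6 P ρ) (hac : ρ ≪ ν) :
    ρ = ν := by
  have hdens : ν.withDensity (ρ.rnDeriv ν) = ρ := Measure.withDensity_rnDeriv_eq ρ ν hac
  have hF : MeasurableSet {x | 1 < ρ.rnDeriv ν x} :=
    measurableSet_lt measurable_const (ρ.measurable_rnDeriv ν)
  rcases hν.2 _ hF fun t ht => isAEInvariantSet_one_lt_rnDeriv (hν.1 t ht) (hρ t ht) hac
    with h0 | h1
  · have hle : ρ.rnDeriv ν ≤ᵐ[ν] 1 := ae_iff.mpr (by simpa only [Pi.one_apply, not_le] using h0)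
    refine Measure.eq_of_le_of_isProbabilityMeasure ?_
    calc ρ = ν.withDensity (ρ.rnDeriv ν) := hdens.symm
      _ ≤ ν.withDensity 1 := withDensity_mono hle
      _ = ν := withDensity_one
  · have hgt : ∀ᵐ x ∂ν, 1 < ρ.rnDeriv ν x := ae_iff.mpr ((prob_compl_eq_zero_iff hF).mpr h1)
    have hge : 1 ≤ᵐ[ν] ρ.rnDeriv ν := hgt.mono fun _ hx => hx.le
    refine (Measure.eq_of_le_of_isProbabilityMeasure ?_).symm
    calc ν = ν.withDensity 1 := withDensity_one.symm
      _ ≤ ν.withDensity (ρ.rnDeriv ν) := withDensity_mono hge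
      _ = ρ := hdens

lemma bind_map_eq_map_bind {κ : Kernel X X} {η : Kernel Y Y} {f : X → Y} (hf : Measurable f)
    (hκη : ∀ x, (κ x).map f = η (f x)) (m : Measure X) :
    (m.map f).bind η = (m.bind κ).map f := by
  ext A hA
  rw [Measure.bind_apply hA η.aemeasurable, lintegral_map (η.measurable_coe hA) hf,
    Measure.map_apply hf hA, Measure.bind_apply (hf hA) κ.aemeasurable]
  simp_rw [← hκη, Measure.map_apply hf hA]

lemma IsInvariant6.map {P : ℝ → Kernel Y Y} {Q : ℝ → Kernel X X} {f : X → Y}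
    (hf : Measurable f) (hproj : ∀ t : ℝ, 0 < t → ∀ x, (Q t x).map f = P t (f x))
    {m : Measure X} (hm : IsInvariant6 Q m) : IsInvariant6 P (m.map f) := fun t ht => by
  rw [bind_map_eq_map_bind hf (hproj t ht), hm t ht]

lemma smul_cond_eq_restrict (μ : Measure X) [IsFiniteMeasure μ] (E : Set X) :
    μ E • μ[|E] = μ.restrict E := by
  by_cases hE : μ E = 0
  · simp [hE, Measure.restrict_eq_zero.mpr hE]
  · rw [ProbabilityTheory.cond, smul_smul, ENNReal.mul_inv_cancel hE (measure_ne_top μ E),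
      one_smul]

section Conditioning

variable {Q : ℝ → Kernel X X} (hQ : ∀ t, IsMarkovKernel (Q t)) {μ : Measure X} {E : Set X}
  (hE : MeasurableSet E) (hEinv : ∀ t : ℝ, 0 < t → IsAEInvariantSet (Q t) μ E)
include hQ hE hEinv

lemma IsInvariant6.cond (hμ : IsInvariant6 Q μ) : IsInvariant6 Q μ[|E] := fun t ht => by
  have := hQ t
  rw [ProbabilityTheory.cond, Measure.comp_smul,
    restrict_bind_eq_of_isAEInvariantSet (hμ t ht) hE (hEinv t ht)]

lemma IsErgodic6.map_cond_eq {P : ℝ → Kernel Y Y} (hP : ∀ t, IsMarkovKernel (P t))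
    {ν : Measure Y} [IsProbabilityMeasure ν] (hν : IsErgodic6 P ν) {f : X → Y}
    (hf : Measurable f) (hproj : ∀ t : ℝ, 0 < t → ∀ x, (Q t x).map f = P t (f x))
    [IsFiniteMeasure μ] (hμ : IsInvariant6 Q μ) (hμν : μ.map f = ν) (hE0 : μ E ≠ 0) :
    (μ[|E]).map f = ν := by
  have := cond_isProbabilityMeasure hE0
  have := Measure.isProbabilityMeasure_map (μ := μ[|E]) hf.aemeasurable
  refine hν.eq_of_absolutelyContinuous hP ((hμ.cond hQ hE hEinv).map hf hproj) ?_
  exact hμν ▸ cond_absolutelyContinuous.map hf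

end Conditioning

end

theorem stmt6_general {Z W : Type*}
    [MeasurableSpace Z] [MeasurableSpace W]
    (P : ℝ → Kernel Z Z) (Q : ℝ → Kernel (Z × W) (Z × W))
    (hP : ∀ t, IsMarkovKernel (P t)) (hQ : ∀ t, IsMarkovKernel (Q t))
    (hproj : ∀ t : ℝ, 0 < t → ∀ p : Z × W, (Q t p).map Prod.fst = P t p.1)
    (ν : Measure Z) [IsProbabilityMeasure ν] (hν : IsErgodic6 P ν)
    (𝒬 : Set (Measure (Z × W)))
    (h𝒬 : 𝒬 = {m | IsProbabilityMeasure m ∧ IsInvariant6 Q m ∧ m.map Prod.fst = ν})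
    (μ : Measure (Z × W)) (hμ𝒬 : μ ∈ 𝒬)
    (hextreme : ∀ μ₁ ∈ 𝒬, ∀ μ₂ ∈ 𝒬, ∀ t : ℝ≥0∞, 0 < t → t < 1 →
      μ = (1 - t) • μ₁ + t • μ₂ → μ₁ = μ₂) :
    IsErgodic6 Q μ := by
  subst h𝒬
  obtain ⟨hμprob, hμinv, hμν⟩ := hμ𝒬
  have hcond_mem : ∀ E, MeasurableSet E → (∀ t : ℝ, 0 < t → IsAEInvariantSet (Q t) μ E) →
      μ E ≠ 0 → μ[|E] ∈ {m | IsProbabilityMeasure m ∧ IsInvariant6 Q m ∧ m.map Prod.fst = ν} :=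
    fun E hE hEinv hE0 => ⟨cond_isProbabilityMeasure hE0, hμinv.cond hQ hE hEinv,
      hν.map_cond_eq hQ hE hEinv hP measurable_fst hproj hμinv hμν hE0⟩
  refine ⟨hμinv, fun E hE hEinv => ?_⟩
  by_contra! hE01
  have hEcinv : ∀ t : ℝ, 0 < t → IsAEInvariantSet (Q t) μ Eᶜ :=
    fun t ht => have := hQ t; IsAEInvariantSet.compl hE (hEinv t ht)
  have hEc0 : μ Eᶜ ≠ 0 := by rw [Ne, prob_compl_eq_zero_iff hE]; exact hE01.2
  have hdecomp : μ = (1 - μ E) • μ[|Eᶜ] + μ E • μ[|E] := by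
    rw [← prob_compl_eq_one_sub hE, smul_cond_eq_restrict, smul_cond_eq_restrict, add_comm,
      Measure.restrict_add_restrict_compl hE]
  have hcond_eq := hextreme _ (hcond_mem Eᶜ hE.compl hEcinv hEc0) _ (hcond_mem E hE hEinv hE01.1)
    (μ E) (pos_iff_ne_zero.mpr hE01.1) (prob_le_one.lt_of_ne hE01.2) hdecomp
  have hmass := congrArg (· E) hcond_eq
  simp [cond_apply hE.compl, hE01.1] at hmass

/-- Let `Z, W` be Polish spaces, `P` a Markov semigroup on `Z` and `Q`
a Markov semigroup on `Z × W` projecting onto `P`.  Let `ν` be an ergodic measure for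
`P` and let `𝒬` be the convex set of invariant probability measures for `Q` whose
`Z`-marginal is `ν`.  Every extreme point of `𝒬` is an ergodic measure for `Q`. -/
theorem stmt6 {Z W : Type*}
    [MeasurableSpace Z] [TopologicalSpace Z] [PolishSpace Z] [BorelSpace Z]
    [MeasurableSpace W] [TopologicalSpace W] [PolishSpace W] [BorelSpace W]
    (P : ℝ → Kernel Z Z) (Q : ℝ → Kernel (Z × W) (Z × W))
    (hP : ∀ t, IsMarkovKernel (P t)) (hQ : ∀ t, IsMarkovKernel (Q t))
    (hproj : ∀ t : ℝ, 0 < t → ∀ p : Z × W, (Q t p).map Prod.fst = P t p.1)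
    (ν : Measure Z) [IsProbabilityMeasure ν] (hν : IsErgodic6 P ν)
    (𝒬 : Set (Measure (Z × W)))
    (h𝒬 : 𝒬 = {m | IsProbabilityMeasure m ∧ IsInvariant6 Q m ∧ m.map Prod.fst = ν})
    (μ : Measure (Z × W)) (hμ𝒬 : μ ∈ 𝒬)
    (hextreme : ∀ μ₁ ∈ 𝒬, ∀ μ₂ ∈ 𝒬, ∀ t : ℝ≥0∞, 0 < t → t < 1 →
      μ = (1 - t) • μ₁ + t • μ₂ → μ₁ = μ₂) :
    IsErgodic6 Q μ :=
  stmt6_general P Q hP hQ hproj ν hν 𝒬 h𝒬 μ hμ𝒬 hextreme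
end
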